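/- Let M be an observable FSM with n states, all reachable, and let I be an observable FSM over the same input and output alphabets with at most m states, where m ≥ n. If I passes the test suite ΣI^{mn} consisting of all input sequences of length mn, then I is a strong reduction of M. -/
import Mathlib


/-- A finite state machine over state type `S`, input alphabet `X`
and output alphabet `Y`, given by an initial state and a transition
relation `h ⊆ S × X × Y × S`. -/
structure FSM (S X Y : Type) where
  init : S
  h : Set (S × X × Y × S)

namespace FSM

variable {S T X Y : Type}

/-- `path M s α t` holds iff the IO sequence `α` can take `M` from state `s` to state `t`. -/
def path (M : FSM S X Y) : S → List (X × Y) → S → Prop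
  | s, [], t => t = s
  | s, p :: α, t => ∃ s', (s, p.1, p.2, s') ∈ M.h ∧ path M s' α t

/-- `α ∈ L_M(s)`. -/
def LangFrom (M : FSM S X Y) (s : S) (α : List (X × Y)) : Prop :=
  ∃ t, M.path s α t

/-- `α ∈ L(M)`. -/
def Lang (M : FSM S X Y) (α : List (X × Y)) : Prop :=
  M.LangFrom M.init α

def out (M : FSM S X Y) (s : S) (x : X) : Set Y :=
  {y | ∃ s', (s, x, y, s') ∈ M.h}

/-- The set `Δ_M(s)` of inputs defined in state `s`. -/
def definedInputs (M : FSM S X Y) (s : S) : Set X :=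
  {x | (M.out s x).Nonempty}

def Observable (M : FSM S X Y) : Prop :=
  ∀ s x y s₁ s₂, (s, x, y, s₁) ∈ M.h → (s, x, y, s₂) ∈ M.h → s₁ = s₂

def Deterministic (M : FSM S X Y) : Prop :=
  ∀ s x, (M.out s x).Subsingleton

def CompletelySpecified (M : FSM S X Y) : Prop :=
  ∀ s, M.definedInputs s = Set.univ

end FSM

/-- The input portion of an IO sequence. -/
def inputs {X Y : Type} (α : List (X × Y)) : List X := α.map Prod.fst

/-- `Pref A`: the set of all prefixes of sequences in `A`. -/
def Pref {X : Type} (A : Set (List X)) : Set (List X) :=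
  {p | ∃ a ∈ A, p <+: a}

/-- `A.B`: concatenation of sets of sequences, with the convention `A.∅ = A`. -/
def dotSet {X : Type} (A B : Set (List X)) : Set (List X) :=
  {c | (B = ∅ ∧ c ∈ A) ∨ ∃ a ∈ A, ∃ b ∈ B, c = a ++ b}

namespace FSM

variable {S T X Y : Type}

/-- `I` passes the test case `xs` w.r.t. the reference model `M`
(grey-box pass relation). -/
def Passes (M : FSM S X Y) (I : FSM T X Y) (xs : List X) : Prop :=
  ∀ α : List (X × Y), inputs α <+: xs → I.Lang α →
    M.Lang α ∧
    ∀ (t : T) (s : S), I.path I.init α t → M.path M.init α s →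
      I.definedInputs t = M.definedInputs s

/-- `I` passes the test suite `Ts` w.r.t. the reference model `M`. -/
def PassesSuite (M : FSM S X Y) (I : FSM T X Y) (Ts : Set (List X)) : Prop :=
  ∀ xs ∈ Ts, M.Passes I xs

/-- `I` is a strong reduction of `M`. -/
def StrongReduction (I : FSM T X Y) (M : FSM S X Y) : Prop :=
  (∀ α, I.Lang α → M.Lang α) ∧
  ∀ α, I.Lang α → ∀ (t : T) (s : S), I.path I.init α t → M.path M.init α s →
    I.definedInputs t = M.definedInputs s

/-- `I` is a quasi-reduction of `M`. -/
def QuasiReduction (I : FSM T X Y) (M : FSM S X Y) : Prop :=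
  ∀ α, I.Lang α → M.Lang α →
    ∀ (x : X) (sM : S) (tI : T), M.path M.init α sM → I.path I.init α tI →
      x ∈ M.definedInputs sM →
      x ∈ I.definedInputs tI ∧
      ∀ y : Y, I.Lang (α ++ [(x, y)]) → M.Lang (α ++ [(x, y)])

/-- `RDist M k s₁ s₂`: states `s₁` and `s₂` are r(k)-distinguishable. -/
def RDist (M : FSM S X Y) : ℕ → S → S → Prop
  | 0, s₁, s₂ => M.definedInputs s₁ ≠ M.definedInputs s₂
  | k + 1, s₁, s₂ => RDist M k s₁ s₂ ∨
      ∃ x ∈ M.definedInputs s₁ ∩ M.definedInputs s₂,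
        M.out s₁ x ∩ M.out s₂ x = ∅ ∨
        ∀ y ∈ M.out s₁ x ∩ M.out s₂ x, ∀ s₁' s₂',
          (s₁, x, y, s₁') ∈ M.h → (s₂, x, y, s₂') ∈ M.h → RDist M k s₁' s₂'

/-- `s₁` and `s₂` are r-distinguishable. -/
def RDistinguishable (M : FSM S X Y) (s₁ s₂ : S) : Prop :=
  ∃ k, M.RDist k s₁ s₂

/-- `RDistBy M k W s₁ s₂`: the set `W` of input sequences r(k)-distinguishes `s₁` and `s₂`. -/
def RDistBy (M : FSM S X Y) : ℕ → Set (List X) → S → S → Prop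
  | 0, _, s₁, s₂ => M.definedInputs s₁ ≠ M.definedInputs s₂
  | k + 1, W, s₁, s₂ => RDistBy M k W s₁ s₂ ∨
      ∃ x, x ∈ M.definedInputs s₁ ∩ M.definedInputs s₂ ∧ [x] ∈ Pref W ∧
        ∀ y ∈ M.out s₁ x ∩ M.out s₂ x,
          ∃ W' : Set (List X), dotSet {[x]} W' ⊆ Pref W ∧
            ∀ s₁' s₂', (s₁, x, y, s₁') ∈ M.h → (s₂, x, y, s₂') ∈ M.h →
              RDistBy M k W' s₁' s₂'

/-- The set `W` r-distinguishes `s₁` and `s₂`. -/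
def RDistinguishedBy (M : FSM S X Y) (W : Set (List X)) (s₁ s₂ : S) : Prop :=
  ∃ k, M.RDistBy k W s₁ s₂

/-- The input sequence `xs` is strongly defined in `M`. -/
def StronglyDefined (M : FSM S X Y) (xs : List X) : Prop :=
  ∀ (xs₁ : List X) (x : X), xs₁ ++ [x] <+: xs →
    ∀ α : List (X × Y), inputs α = xs₁ → M.Lang α →
      ∀ t, M.path M.init α t → x ∈ M.definedInputs t

/-- The input sequence `xs` d-reaches state `s` in `M`. -/
def DReaches (M : FSM S X Y) (xs : List X) (s : S) : Prop :=
  M.StronglyDefined xs ∧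
  (∃ α, inputs α = xs ∧ M.path M.init α s) ∧
  (∀ α t, inputs α = xs → M.path M.init α t → t = s)

def DReachable (M : FSM S X Y) (s : S) : Prop :=
  ∃ xs, M.DReaches xs s

/-- A set of states that is pairwise r-distinguishable. -/
def PairwiseRDist (M : FSM S X Y) (A : Set S) : Prop :=
  ∀ s₁ ∈ A, ∀ s₂ ∈ A, s₁ ≠ s₂ → M.RDistinguishable s₁ s₂

/-- `S_D`: the set of maximal sets of pairwise r-distinguishable states of `M`. -/
def SD (M : FSM S X Y) : Set (Set S) :=
  {A | M.PairwiseRDist A ∧ ∀ B, M.PairwiseRDist B → A ⊆ B → B = A}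

/-- `|Ŝ'|`: the number of d-reachable states in `A`. -/
noncomputable def dHat (M : FSM S X Y) (A : Set S) : ℕ :=
  {t ∈ A | M.DReachable t}.ncard

open Classical in
/-- The number of nonempty prefixes of `α` that, applied to `s`, reach states of `A`. -/
noncomputable def visitCount (M : FSM S X Y) (s : S) (α : List (X × Y)) (A : Set S) : ℕ :=
  ((Finset.range α.length).filter (fun i => ∃ t ∈ A, M.path s (α.take (i + 1)) t)).card

/-- `A ∈ S_D` terminates the trace `α` for `s` and `m`. -/
def TerminatedBy (M : FSM S X Y) (m : ℕ) (s : S) (α : List (X × Y)) (A : Set S) : Prop :=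
  A ∈ M.SD ∧ M.visitCount s α A = m - M.dHat A + 1 ∧
  ∀ β : List (X × Y), β.length < α.length → β <+: α →
    ∀ B : Set S, ¬ TerminatedBy M m s β B
termination_by α.length

/-- The traversal set `Tr(s, m)`. -/
def Tr (M : FSM S X Y) (s : S) (m : ℕ) : Set (List X) :=
  Pref {xs | ∃ α, inputs α = xs ∧ M.LangFrom s α ∧ ∃ A, M.TerminatedBy m s α A}

end FSM

namespace FSM

lemma path_append {S X Y : Type} (M : FSM S X Y) :
    ∀ (α β : List (X × Y)) (s u : S),
      M.path s (α ++ β) u ↔ ∃ v, M.path s α v ∧ M.path v β u := by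
  intro α
  induction α with
  | nil =>
    intro β s u
    constructor
    · intro h; exact ⟨s, rfl, h⟩
    · rintro ⟨v, hv, h⟩; cases hv; exact h
  | cons p α ih =>
    intro β s u
    constructor
    · rintro ⟨s', hmem, h⟩
      obtain ⟨v, h1, h2⟩ := (ih β s' u).mp h
      exact ⟨v, ⟨s', hmem, h1⟩, h2⟩
    · rintro ⟨v, ⟨s', hmem, h1⟩, h2⟩
      exact ⟨s', hmem, (ih β s' u).mpr ⟨v, h1, h2⟩⟩

lemma path_unique {S X Y : Type} {M : FSM S X Y} (hM : M.Observable) :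
    ∀ (α : List (X × Y)) (s t₁ t₂ : S),
      M.path s α t₁ → M.path s α t₂ → t₁ = t₂ := by
  intro α
  induction α with
  | nil => intro s t₁ t₂ h1 h2; cases h1; cases h2; rfl
  | cons p α ih =>
    rintro s t₁ t₂ ⟨s₁, hm1, h1⟩ ⟨s₂, hm2, h2⟩
    cases hM s p.1 p.2 s₁ s₂ hm1 hm2
    exact ih s₁ t₁ t₂ h1 h2

end FSM

theorem bruteForce_key {S T X Y : Type} [Finite S] [Finite T]
    (M : FSM S X Y) (hM : M.Observable)
    (m : ℕ) (hm : Nat.card S ≤ m)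
    (I : FSM T X Y) (hI : I.Observable) (hT : Nat.card T ≤ m)
    (hpass : M.PassesSuite I {xs : List X | xs.length = m * Nat.card S}) :
    ∀ α, I.Lang α → M.Lang α ∧
      ∀ (t : T) (s : S), I.path I.init α t → M.path M.init α s →
        I.definedInputs t = M.definedInputs s := by
  set n := Nat.card S with hn
  suffices H : ∀ (k : ℕ) (α : List (X × Y)), α.length = k → I.Lang α →
      M.Lang α ∧ ∀ (t : T) (s : S), I.path I.init α t → M.path M.init α s →
        I.definedInputs t = M.definedInputs s by
    intro α; exact H α.length α rfl
  intro k
  induction k using Nat.strong_induction_on with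
  | _ k ih =>
  intro α hlen hLang
  by_cases hk : k ≤ m * n
  · by_cases hX : Nonempty X
    · obtain ⟨x₀⟩ := hX
      have hlena : (inputs α).length = k := by simpa [inputs] using hlen
      have hmem : (inputs α ++ List.replicate (m * n - k) x₀) ∈
          {xs : List X | xs.length = m * n} := by
        simp only [Set.mem_setOf_eq, List.length_append, List.length_replicate, hlena]
        omega
      exact hpass _ hmem α ⟨List.replicate (m * n - k) x₀, rfl⟩ hLang
    · haveI : IsEmpty X := not_nonempty_iff.mp hX
      cases α with
      | nil =>
        refine ⟨⟨M.init, rfl⟩, ?_⟩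
        intro t s _ _
        rw [Set.eq_empty_of_isEmpty (I.definedInputs t),
          Set.eq_empty_of_isEmpty (M.definedInputs s)]
      | cons p _ => exact (IsEmpty.false p.1).elim
  · push_neg at hk
    obtain ⟨tf, htf⟩ := hLang
    have hprefI : ∀ i : ℕ, ∃ t, I.path I.init (α.take i) t ∧ I.path t (α.drop i) tf := by
      intro i
      exact (I.path_append (α.take i) (α.drop i) I.init tf).mp
        (by rwa [List.take_append_drop])
    have hex : ∀ i : Fin (m * n + 1), ∃ ts : T × S,
        I.path I.init (α.take i.val) ts.1 ∧ M.path M.init (α.take i.val) ts.2 := by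
      intro i
      have hi' : i.val ≤ m * n := Nat.lt_succ_iff.mp i.isLt
      obtain ⟨t, ht, -⟩ := hprefI i.val
      have hlt : (α.take i.val).length < k := by
        rw [List.length_take]; omega
      obtain ⟨hL, -⟩ := ih _ hlt _ rfl ⟨t, ht⟩
      obtain ⟨s, hs⟩ := hL
      exact ⟨(t, s), ht, hs⟩
    choose f hf1 hf2 using hex
    haveI := Fintype.ofFinite T
    haveI := Fintype.ofFinite S
    have hcard : Fintype.card (T × S) < Fintype.card (Fin (m * n + 1)) := by
      rw [Fintype.card_prod, Fintype.card_fin]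
      have h1 : Fintype.card T ≤ m := by rw [← Nat.card_eq_fintype_card]; exact hT
      have h2 : Fintype.card S = n := by rw [← Nat.card_eq_fintype_card]
      calc Fintype.card T * Fintype.card S ≤ m * n := by
            rw [h2]; exact Nat.mul_le_mul_right n h1
        _ < m * n + 1 := Nat.lt_succ_self _
    obtain ⟨i, j, hne, hfeq⟩ := Fintype.exists_ne_map_eq_of_card_lt f hcard
    have hcore : ∀ i j : Fin (m * n + 1), i.val < j.val → f i = f j →
        M.Lang α ∧ ∀ (t : T) (s : S), I.path I.init α t → M.path M.init α s →
          I.definedInputs t = M.definedInputs s := by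
      clear hne hfeq i j
      intro i j hij hfeq
      have hj : j.val ≤ m * n := Nat.lt_succ_iff.mp j.isLt
      -- I runs β := take i ++ drop j, ending at tf
      obtain ⟨t', ht'1, ht'2⟩ := hprefI j.val
      have heqt : (f j).1 = t' := FSM.path_unique hI _ _ _ _ (hf1 j) ht'1
      have hIβ : I.path I.init (α.take i.val ++ α.drop j.val) tf :=
        (I.path_append _ _ _ _).mpr ⟨(f i).1, hf1 i, by rw [hfeq, heqt]; exact ht'2⟩
      have hβlen : (α.take i.val ++ α.drop j.val).length < k := by
        rw [List.length_append, List.length_take, List.length_drop, hlen]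
        omega
      obtain ⟨hMβ, hdef⟩ := ih _ hβlen _ rfl ⟨tf, hIβ⟩
      obtain ⟨sf, hsf⟩ := hMβ
      obtain ⟨v, hv1, hv2⟩ := (M.path_append _ _ _ _).mp hsf
      have hv : v = (f j).2 := by
        rw [← hfeq]; exact FSM.path_unique hM _ _ _ _ hv1 (hf2 i)
      have hMα : M.path M.init α sf := by
        rw [← List.take_append_drop j.val α]
        exact (M.path_append _ _ _ _).mpr ⟨(f j).2, hf2 j, hv ▸ hv2⟩
      refine ⟨⟨sf, hMα⟩, ?_⟩
      intro t s ht hs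
      have h1 : t = tf := FSM.path_unique hI _ _ _ _ ht htf
      have h2 : s = sf := FSM.path_unique hM _ _ _ _ hs hMα
      rw [h1, h2]
      exact hdef tf sf hIβ hsf
    rcases Ne.lt_or_gt hne with h | h
    · exact hcore i j h hfeq
    · exact hcore j i h hfeq.symm

theorem bruteForce_exhaustive' {S T X Y : Type} [Finite S] [Finite T]
    (M : FSM S X Y) (hM : M.Observable)
    (hreach : ∀ s : S, ∃ α, M.path M.init α s)
    (m : ℕ) (hm : Nat.card S ≤ m)
    (I : FSM T X Y) (hI : I.Observable) (hT : Nat.card T ≤ m)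
    (hpass : M.PassesSuite I {xs : List X | xs.length = m * Nat.card S}) :
    I.StrongReduction M := by
  have key := bruteForce_key M hM m hm I hI hT hpass
  exact ⟨fun α h => (key α h).1, fun α h => (key α h).2⟩

/-- brute force: an observable implementation with at most `m`
states that passes the test suite of all input sequences of length `m·n` is a
strong reduction of the `n`-state reference model `M`. -/
theorem bruteForce_exhaustive {S T X Y : Type} [Finite S] [Finite T]
    (M : FSM S X Y) (hM : M.Observable)
    (hreach : ∀ s : S, ∃ α, M.path M.init α s)
    (m : ℕ) (hm : Nat.card S ≤ m)
    (I : FSM T X Y) (hI : I.Observable) (hT : Nat.card T ≤ m)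
    (hpass : M.PassesSuite I {xs : List X | xs.length = m * Nat.card S}) :
    I.StrongReduction M :=
  bruteForce_exhaustive' M hM hreach m hm I hI hT hpass
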